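/- arXiv:1703.00319 — 6 statements merged into one kernel-verified Lean document; each statement's English description precedes it below -/
import Mathlib

section
/- Let M ∈ ℝ^{d×d} be a Metzler matrix. Then M is Hurwitz stable if and only if there exists a vector v ∈ ℝ^d with all entries positive such that vᵀM has all entries negative. -/
open Matrix

def Metzler {d : ℕ} (M : Matrix (Fin d) (Fin d) ℝ) : Prop :=
  ∀ i j, i ≠ j → 0 ≤ M i j

def HurwitzStable {d : ℕ} (M : Matrix (Fin d) (Fin d) ℝ) : Prop :=
  ∀ μ ∈ spectrum ℂ (M.map Complex.ofReal), μ.re < 0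

/-!
If `vᵀM < 0` with `v > 0` and `Mx = μx`, then `w = |x|` satisfies `(Re μ) w ≤ M w` because the
off-diagonal entries of `M` are nonnegative, and pairing with `v` gives
`Re μ · (v ⬝ w) ≤ (vᵀM) ⬝ w < 0`.

Conversely, for a Hurwitz stable Metzler `M` and `s > 0` large, `C = s⁻¹ (M + s)` is entrywise
nonnegative and its eigenvalues `1 + μ / s` lie in the open unit disc, so by Gelfand's formula
`Cⁿ → 0` and the Neumann series shows `(1 - C)⁻¹ ≥ 0`. Hence `P = -M⁻¹ = s⁻¹ (1 - C)⁻¹ ≥ 0`,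
and `v = 1ᵀ P` works: `vᵀM = -1ᵀ`, and `v > 0` because `P` has no zero column.
-/

open Filter Topology

theorem tendsto_pow_atTop_nhds_zero_of_spectralRadius_lt_one {A : Type*} [NormedRing A]
    [NormedAlgebra ℂ A] [CompleteSpace A] {a : A} (ha : spectralRadius ℂ a < 1) :
    Tendsto (a ^ ·) atTop (𝓝 0) := by
  obtain ⟨r, hρr, hr1⟩ := ENNReal.lt_iff_exists_nnreal_btwn.mp ha
  have hr : Tendsto (fun n : ℕ => (r : ℝ) ^ n) atTop (𝓝 0) :=
    tendsto_pow_atTop_nhds_zero_of_lt_one r.2 (by exact_mod_cast hr1)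
  refine squeeze_zero_norm' ?_ hr
  filter_upwards [(spectrum.pow_nnnorm_pow_one_div_tendsto_nhds_spectralRadius a).eventually_lt_const
    hρr, eventually_gt_atTop 0] with n hn hn0
  rw [one_div, ENNReal.rpow_inv_lt_iff (by positivity), ENNReal.rpow_natCast] at hn
  exact_mod_cast hn.le

theorem spectrum.mem_smul_algebraMap_add_iff {𝕜 A : Type*} [Field 𝕜] [Ring A] [Algebra 𝕜 A]
    {k : 𝕜} (hk : k ≠ 0) (r : 𝕜) (a : A) {ν : 𝕜} :
    ν ∈ spectrum 𝕜 (k • (algebraMap 𝕜 A r + a)) ↔ ∃ μ ∈ spectrum 𝕜 a, ν = k * (r + μ) := by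
  rw [show k • (algebraMap 𝕜 A r + a) = (Units.mk0 k hk) • (algebraMap 𝕜 A r + a) from rfl,
    spectrum.unit_smul_eq_smul, ← spectrum.singleton_add_eq, Set.singleton_add]
  simp only [Set.mem_smul_set, Set.mem_image, exists_exists_and_eq_and, Units.smul_mk0,
    smul_eq_mul, eq_comm (b := ν)]

theorem Complex.norm_ofReal_add_lt {μ : ℂ} {s : ℝ} (hμ : μ.re < 0)
    (hs : ‖μ‖ ^ 2 / (-2 * μ.re) < s) : ‖(s : ℂ) + μ‖ < s := by
  have hs₀ : 0 < s := lt_of_le_of_lt (div_nonneg (sq_nonneg _) (by linarith)) hs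
  rw [div_lt_iff₀ (by linarith), Complex.sq_norm, Complex.normSq_apply] at hs
  have hsq : ‖(s : ℂ) + μ‖ ^ 2 = (s + μ.re) ^ 2 + μ.im ^ 2 := by
    rw [Complex.sq_norm, Complex.normSq_apply]
    simp only [Complex.add_re, Complex.add_im, Complex.ofReal_re, Complex.ofReal_im]
    ring
  nlinarith [norm_nonneg ((s : ℂ) + μ)]

namespace Matrix

variable {n : Type*} [Fintype n] [DecidableEq n]

theorem exists_mulVec_eq_smul_of_mem_spectrum {K : Type*} [Field K] {A : Matrix n n K} {μ : K}
    (hμ : μ ∈ spectrum K A) : ∃ x ≠ 0, A *ᵥ x = μ • x := by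
  rw [← spectrum_toLin'] at hμ
  obtain ⟨x, hx⟩ := (Module.End.hasEigenvalue_iff_mem_spectrum.mpr hμ).exists_hasEigenvector
  exact ⟨x, hx.2, by simpa using hx.apply_eq_smul⟩

omit [DecidableEq n] in
theorem norm_map_ofReal_mulVec_apply_le {m : Type*} {B : Matrix m n ℝ} (hB : ∀ i j, 0 ≤ B i j)
    (x : n → ℂ) (i : m) : ‖(B.map Complex.ofReal *ᵥ x) i‖ ≤ (B *ᵥ fun k => ‖x k‖) i := by
  simp only [mulVec, dotProduct, map_apply]
  refine (norm_sum_le _ _).trans_eq (Finset.sum_congr rfl fun k _ => ?_)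
  rw [norm_mul, Complex.norm_real, Real.norm_of_nonneg (hB i k)]

omit [DecidableEq n] in
theorem dotProduct_pos_of_pos_of_pos {R : Type*} [Semiring R] [PartialOrder R]
    [IsStrictOrderedRing R] {v w : n → R} (hv : ∀ i, 0 < v i) (hw : 0 < w) : 0 < v ⬝ᵥ w := by
  obtain ⟨hw₀, i, hi⟩ := Pi.lt_def.mp hw
  exact Finset.sum_pos' (fun j _ => mul_nonneg (hv j).le (hw₀ j))
    ⟨i, Finset.mem_univ i, mul_pos (hv i) hi⟩

theorem exists_pos_vecMul_neg_of_mul_eq_neg_one {M P : Matrix n n ℝ} (hP : ∀ i j, 0 ≤ P i j)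
    (hPM : P * M = -1) : ∃ v : n → ℝ, (∀ i, 0 < v i) ∧ ∀ j, (v ᵥ* M) j < 0 := by
  have hMP : M * P = -1 := by
    rw [← neg_eq_iff_eq_neg, ← mul_neg, mul_eq_one_comm, neg_mul, neg_eq_iff_eq_neg, hPM]
  refine ⟨1 ᵥ* P, fun j => ?_, fun j => ?_⟩
  · -- a vanishing column sum would make column `j` of `P` zero, contradicting `(M * P) j j = -1`
    refine (Finset.sum_nonneg fun i _ => by simpa using hP i j).lt_of_ne fun h => ?_
    have hcol : ∀ i, P i j = 0 := fun i => by
      simpa using (Finset.sum_eq_zero_iff_of_nonneg fun i _ => by simpa using hP i j).mp h.symm i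
    have := congrFun (congrFun hMP j) j
    simp [mul_apply, hcol] at this
  · simp [vecMul_vecMul, hPM, vecMul_neg]

theorem tendsto_pow_of_forall_mem_spectrum_norm_lt_one (C : Matrix n n ℝ)
    (hC : ∀ z ∈ spectrum ℂ (C.map Complex.ofReal), ‖z‖ < 1) :
    Tendsto (C ^ ·) atTop (𝓝 0) := by
  cases isEmpty_or_nonempty n
  · simp [Subsingleton.elim _ (0 : Matrix n n ℝ)]
  have hCℂ : Tendsto (C.map Complex.ofReal ^ ·) atTop (𝓝 0) := by
    let := Matrix.linftyOpNormedRing (n := n) (α := ℂ)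
    let := Matrix.linftyOpNormedAlgebra (n := n) (α := ℂ) (R := ℂ)
    have : CompleteSpace (Matrix n n ℂ) := FiniteDimensional.complete ℂ _
    refine tendsto_pow_atTop_nhds_zero_of_spectralRadius_lt_one ?_
    simpa using spectrum.spectralRadius_lt_of_forall_lt (C.map Complex.ofReal) (r := 1)
      fun z hz => by exact_mod_cast hC z hz
  have hre : Continuous fun B : Matrix n n ℂ => B.map Complex.re :=
    continuous_id.matrix_map Complex.continuous_re
  convert (hre.tendsto 0).comp hCℂ using 2 with k
  · have hpow : C.map Complex.ofReal ^ k = (C ^ k).map Complex.ofReal :=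
      (map_pow Complex.ofRealHom.mapMatrix C k).symm
    ext
    simp [hpow]
  · simp

theorem isUnit_one_sub_of_tendsto_pow {K : Type*} [Field K] [TopologicalSpace K]
    [IsTopologicalRing K] [T2Space K] {C : Matrix n n K}
    (hC : Tendsto (C ^ ·) atTop (𝓝 0)) : IsUnit (1 - C) := by
  rw [isUnit_iff_isUnit_det, isUnit_iff_ne_zero]
  intro hdet
  obtain ⟨v, hv, hCv⟩ := exists_mulVec_eq_zero_iff.mpr hdet
  have hfix : ∀ k, (C ^ k) *ᵥ v = v := by
    have hCv' : C *ᵥ v = v := by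
      rwa [sub_mulVec, one_mulVec, sub_eq_zero, eq_comm] at hCv
    intro k
    induction k with
    | zero => simp
    | succ k ih => rw [pow_succ, ← mulVec_mulVec, hCv', ih]
  have hlim : Tendsto (fun k => (C ^ k) *ᵥ v) atTop (𝓝 (0 *ᵥ v)) :=
    ((continuous_id.matrix_mulVec continuous_const).tendsto 0).comp hC
  simp only [hfix, zero_mulVec, tendsto_const_nhds_iff] at hlim
  exact hv hlim

theorem inv_one_sub_apply_nonneg {C : Matrix n n ℝ} (hC₀ : ∀ i j, 0 ≤ C i j)
    (hC : Tendsto (C ^ ·) atTop (𝓝 0)) (i j : n) : 0 ≤ (1 - C)⁻¹ i j := by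
  set N := (1 - C)⁻¹
  have hN : (1 - C) * N = 1 :=
    mul_nonsing_inv _ ((isUnit_iff_isUnit_det _).mp (isUnit_one_sub_of_tendsto_pow hC))
  have hsum : ∀ m, ∑ k ∈ Finset.range m, C ^ k = (1 - C ^ m) * N := fun m => by
    rw [← geom_sum_mul_neg, mul_assoc, hN, mul_one]
  have hlim : Tendsto (fun m => ((1 - C ^ m) * N : Matrix n n ℝ) i j) atTop
      (𝓝 (((1 - 0) * N : Matrix n n ℝ) i j)) :=
    ((continuous_id.matrix_elem i j).tendsto _).comp ((tendsto_const_nhds.sub hC).mul_const N)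
  rw [sub_zero, one_mul] at hlim
  refine ge_of_tendsto' hlim fun m => ?_
  rw [← hsum, sum_apply]
  exact Finset.sum_nonneg fun k _ => pow_apply_nonneg hC₀ k i j

end Matrix

namespace Metzler

variable {d : ℕ} {M : Matrix (Fin d) (Fin d) ℝ}

theorem add_diagonal_apply_nonneg (hM : Metzler M) {D : Fin d → ℝ}
    (hD : ∀ i, 0 ≤ M i i + D i) (i j : Fin d) : 0 ≤ (M + diagonal D) i j := by
  rcases eq_or_ne i j with rfl | hij
  · simpa using hD i
  · simpa [hij] using hM i j hij

theorem re_mul_norm_le_mulVec_norm (hM : Metzler M) {μ : ℂ} {x : Fin d → ℂ}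
    (hx : M.map Complex.ofReal *ᵥ x = μ • x) (j : Fin d) :
    μ.re * ‖x j‖ ≤ (M *ᵥ fun k => ‖x k‖) j := by
  -- removing the diagonal leaves a nonnegative matrix, to which the triangle inequality applies
  set B := M + diagonal fun i => -M i i
  have hB := hM.add_diagonal_apply_nonneg (D := fun i => -M i i) (fun i => by simp)
  have hBx : (B.map Complex.ofReal *ᵥ x) j = (μ - M j j) * x j := by
    simp [B, Matrix.map_add, add_mulVec, hx, mulVec_diagonal, sub_mul, ← sub_eq_add_neg]
  have hBw : (B *ᵥ fun k => ‖x k‖) j = (M *ᵥ fun k => ‖x k‖) j - M j j * ‖x j‖ := by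
    simp [B, add_mulVec, mulVec_diagonal, sub_eq_add_neg]
  have htri := norm_map_ofReal_mulVec_apply_le hB x j
  rw [hBx, hBw, norm_mul] at htri
  have hre : μ.re - M j j ≤ ‖μ - M j j‖ := by
    simpa using Complex.re_le_norm (μ - M j j)
  nlinarith [norm_nonneg (x j)]

theorem hurwitzStable_of_pos_vecMul_neg (hM : Metzler M) {v : Fin d → ℝ}
    (hv : ∀ i, 0 < v i) (hvM : ∀ j, (v ᵥ* M) j < 0) : HurwitzStable M := by
  intro μ hμ
  obtain ⟨x, hx₀, hx⟩ := exists_mulVec_eq_smul_of_mem_spectrum hμ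
  set w : Fin d → ℝ := fun k => ‖x k‖
  have hw : 0 < w := by
    obtain ⟨k, hk⟩ := Function.ne_iff.mp hx₀
    exact Pi.lt_def.mpr ⟨fun k => norm_nonneg _, k, norm_pos_iff.mpr hk⟩
  have hle : μ.re * (v ⬝ᵥ w) ≤ (v ᵥ* M) ⬝ᵥ w := by
    rw [← dotProduct_mulVec, ← smul_eq_mul, ← dotProduct_smul]
    exact dotProduct_le_dotProduct_of_nonneg_left (hM.re_mul_norm_le_mulVec_norm hx)
      fun i => (hv i).le
  have hneg : (v ᵥ* M) ⬝ᵥ w < 0 := by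
    simpa using dotProduct_pos_of_pos_of_pos (v := -(v ᵥ* M)) (fun j => neg_pos.mpr (hvM j)) hw
  exact neg_of_mul_neg_left (hle.trans_lt hneg) (dotProduct_pos_of_pos_of_pos hv hw).le

theorem exists_nonneg_mul_eq_neg_one_of_hurwitzStable (hM : Metzler M) (hH : HurwitzStable M) :
    ∃ P : Matrix (Fin d) (Fin d) ℝ, (∀ i j, 0 ≤ P i j) ∧ P * M = -1 := by
  have hdiag : ∀ᶠ s in atTop, ∀ i, 0 ≤ M i i + s := eventually_all.mpr fun i =>
    (eventually_ge_atTop (-M i i)).mono fun s hs => by linarith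
  have hspec : ∀ᶠ s : ℝ in atTop, ∀ μ ∈ spectrum ℂ (M.map Complex.ofReal), ‖(s : ℂ) + μ‖ < s :=
    (finite_spectrum _).eventually_all.mpr fun μ hμ =>
      (eventually_gt_atTop _).mono fun s hs => Complex.norm_ofReal_add_lt (hH μ hμ) hs
  obtain ⟨s, hs₀, hdiag, hspec⟩ := ((eventually_gt_atTop 0).and (hdiag.and hspec)).exists
  set C := s⁻¹ • (M + diagonal fun _ => s)
  have hC₀ : ∀ i j, 0 ≤ C i j := fun i j =>
    mul_nonneg (inv_nonneg.mpr hs₀.le) (hM.add_diagonal_apply_nonneg hdiag i j)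
  have hCspec : ∀ ν ∈ spectrum ℂ (C.map Complex.ofReal), ‖ν‖ < 1 := by
    have hCℂ : C.map Complex.ofReal =
        (s : ℂ)⁻¹ • (algebraMap ℂ _ (s : ℂ) + M.map Complex.ofReal) := by
      ext i j
      rcases eq_or_ne i j with rfl | hij
      · simp [C, algebraMap_eq_diagonal, mul_add, add_comm]
      · simp [C, algebraMap_eq_diagonal, hij]
    intro ν hν
    rw [hCℂ, spectrum.mem_smul_algebraMap_add_iff (by simpa using hs₀.ne')] at hν
    obtain ⟨μ, hμ, rfl⟩ := hν
    rw [norm_mul, norm_inv, Complex.norm_real, Real.norm_of_nonneg hs₀.le, inv_mul_lt_one₀ hs₀]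
    exact hspec μ hμ
  have hpow := tendsto_pow_of_forall_mem_spectrum_norm_lt_one C hCspec
  have hM' : M = -s • (1 - C) := by
    ext i j
    rcases eq_or_ne i j with rfl | hij
    · simp [C]
      field_simp
      ring
    · simp [C, hij, hs₀.ne']
  refine ⟨s⁻¹ • (1 - C)⁻¹, fun i j =>
    mul_nonneg (inv_nonneg.mpr hs₀.le) (inv_one_sub_apply_nonneg hC₀ hpow i j), ?_⟩
  rw [hM', smul_mul_smul_comm, nonsing_inv_mul _ ((isUnit_iff_isUnit_det _).mp
    (isUnit_one_sub_of_tendsto_pow hpow))]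
  simp [hs₀.ne']

end Metzler

theorem stmt3 {d : ℕ} (M : Matrix (Fin d) (Fin d) ℝ) (hM : Metzler M) :
    HurwitzStable M ↔
      ∃ v : Fin d → ℝ, (∀ i, 0 < v i) ∧ ∀ j, (v ᵥ* M) j < 0 := by
  constructor
  · intro hH
    obtain ⟨P, hP, hPM⟩ := hM.exists_nonneg_mul_eq_neg_one_of_hurwitzStable hH
    exact exists_pos_vecMul_neg_of_mul_eq_neg_one hP hPM
  · rintro ⟨v, hv, hvM⟩
    exact hM.hurwitzStable_of_pos_vecMul_neg hv hvM
end

section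
/- Let M ∈ ℝ^{d×d} be a Metzler Hurwitz-stable matrix. Then the vector vᵀ := (-1)^{d+1} 𝟙ᵀ · Adj(M), where Adj denotes the adjugate matrix and 𝟙 the all-ones vector, has all entries positive and satisfies vᵀM = -(-1)^d det(M) 𝟙ᵀ, which is a vector with all entries negative. -/
open Matrix

open Polynomial Filter ENNReal

/-!
For large `s > 0` the matrix `B = 1 + s⁻¹ • M` is entrywise nonnegative (Metzler) and, since the
eigenvalues `1 + μ / s` lie in the open unit disc when `Re μ < 0`, has spectral radius `< 1`
(Hurwitz). Gelfand's formula makes the Neumann series `∑ Bᵏ` converge, and `T = s⁻¹ • ∑ Bᵏ` is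
`-M⁻¹`: entrywise nonnegative with diagonal at least `s⁻¹`, so every column sum of `-M⁻¹` is
positive. Since `adj M = det M • M⁻¹`, the entries of `v` are `(-1)ᵈ det M` times these column
sums, and `(-1)ᵈ det M = charpoly M (0) > 0` because the monic characteristic polynomial has no
root in `[0, ∞)`.
-/

theorem Polynomial.Monic.eval_pos_of_forall_ge {p : ℝ[X]} (hp : p.Monic) {a : ℝ}
    (h : ∀ t, a ≤ t → p.eval t ≠ 0) : 0 < p.eval a := by
  rcases Nat.eq_zero_or_pos p.natDegree with hdeg | hdeg
  · simp [hp.natDegree_eq_zero.mp hdeg]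
  by_contra! ha
  have htop : Tendsto (fun t => p.eval t) atTop atTop :=
    p.tendsto_atTop_of_leadingCoeff_nonneg (natDegree_pos_iff_degree_pos.mp hdeg)
      (by simp [hp.leadingCoeff])
  obtain ⟨b, hb, hab⟩ := ((htop.eventually_gt_atTop 0).and (eventually_ge_atTop a)).exists
  obtain ⟨t, ht, hroot⟩ := intermediate_value_Icc hab p.continuous.continuousOn ⟨ha, hb.le⟩
  exact h t ht.1 hroot

theorem Complex.eventually_norm_one_add_inv_mul_lt_one {μ : ℂ} (hμ : μ.re < 0) :
    ∀ᶠ s : ℝ in atTop, ‖1 + (s : ℂ)⁻¹ * μ‖ < 1 := by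
  filter_upwards [eventually_gt_atTop (‖μ‖ ^ 2 / (-2 * μ.re)), eventually_gt_atTop 0]
    with s hs hs0
  have hμs : ‖μ‖ ^ 2 < s * (-2 * μ.re) := (div_lt_iff₀ (by linarith)).mp hs
  have hsq : ‖(s : ℂ) + μ‖ ^ 2 < s ^ 2 := by
    simp only [Complex.sq_norm, Complex.normSq_apply, Complex.add_re, Complex.add_im,
      Complex.ofReal_re, Complex.ofReal_im] at hμs ⊢
    nlinarith
  have hs' : (s : ℂ) ≠ 0 := by exact_mod_cast hs0.ne'
  rw [show 1 + (s : ℂ)⁻¹ * μ = (s : ℂ)⁻¹ * (s + μ) by field_simp, norm_mul, norm_inv,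
    Complex.norm_real, Real.norm_of_nonneg hs0.le, inv_mul_lt_one₀ hs0]
  exact lt_of_pow_lt_pow_left₀ 2 hs0.le hsq

theorem spectrum.summable_pow_of_spectralRadius_lt_one {A : Type*} [NormedRing A]
    [NormedAlgebra ℂ A] [CompleteSpace A] {a : A} (ha : spectralRadius ℂ a < 1) :
    Summable (a ^ ·) := by
  obtain ⟨r, hr1, hr⟩ :
      ∃ r : NNReal, 1 < (r : ℝ≥0∞) ∧ (r : ℝ≥0∞) < (spectralRadius ℂ a)⁻¹ :=
    ENNReal.lt_iff_exists_nnreal_btwn.mp (ENNReal.one_lt_inv.mpr ha)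
  have hinv := (spectrum.differentiableOn_inverse_one_sub_smul hr).hasFPowerSeriesOnBall
    (by exact_mod_cast zero_lt_one.trans hr1)
  have hser := (spectrum.hasFPowerSeriesOnBall_inverse_one_sub_smul ℂ a).exchange_radius hinv
  simpa using (hser.hasSum (y := 1) (by simpa using hr1)).summable

theorem HasSum.matrix_apply {ι m n α : Type*} [AddCommMonoid α] [TopologicalSpace α]
    {f : ι → Matrix m n α} {S : Matrix m n α} (h : HasSum f S) (i : m) (j : n) :
    HasSum (fun k => f k i j) (S i j) :=
  Pi.hasSum.mp (Pi.hasSum.mp h i) j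

theorem Matrix.summable_of_summable_map_ofReal {ι m n : Type*} {f : ι → Matrix m n ℝ}
    (h : Summable fun i => (f i).map Complex.ofReal) : Summable f := by
  simpa [Function.comp_def, Matrix.map_map] using
    h.map Complex.reLm.toAddMonoidHom.mapMatrix (continuous_id.matrix_map Complex.continuous_re)

section NonnegMatrix

variable {n : Type*} [Fintype n] [DecidableEq n] {B : Matrix n n ℝ}

theorem Matrix.tsum_pow_apply_nonneg (hB : ∀ i j, 0 ≤ B i j) (hsum : Summable (B ^ ·))
    (i j : n) : 0 ≤ (∑' k, B ^ k) i j :=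
  (hsum.hasSum.matrix_apply i j).nonneg fun k => pow_apply_nonneg hB k i j

theorem Matrix.one_le_tsum_pow_apply_self (hB : ∀ i j, 0 ≤ B i j) (hsum : Summable (B ^ ·))
    (i : n) : 1 ≤ (∑' k, B ^ k) i i := by
  simpa using le_hasSum (hsum.hasSum.matrix_apply i i) 0 fun k _ => pow_apply_nonneg hB k i i

end NonnegMatrix

section MetzlerHurwitz

variable {d : ℕ} {M : Matrix (Fin d) (Fin d) ℝ}

theorem HurwitzStable.charpoly_eval_ne_zero (hH : HurwitzStable M) {t : ℝ} (ht : 0 ≤ t) :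
    M.charpoly.eval t ≠ 0 := by
  intro hroot
  have hmem : (t : ℂ) ∈ spectrum ℂ (M.map Complex.ofReal) := by
    have := IsRoot.map (f := Complex.ofRealHom) hroot
    rwa [← charpoly_map, ← Matrix.mem_spectrum_iff_isRoot_charpoly] at this
  simpa using (hH _ hmem).trans_le ht

theorem HurwitzStable.neg_one_pow_mul_det_pos (hH : HurwitzStable M) :
    0 < (-1) ^ d * M.det := by
  have h0 : 0 < M.charpoly.eval 0 :=
    M.charpoly_monic.eval_pos_of_forall_ge fun _ ht => hH.charpoly_eval_ne_zero ht
  rwa [det_eq_sign_charpoly_coeff, coeff_zero_eq_eval_zero, Fintype.card_fin, ← mul_assoc,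
    ← mul_pow, neg_one_mul, neg_neg, one_pow, one_mul]

-- Only to invoke Banach-algebra results: `spectralRadius` does not depend on the norm.
attribute [local instance] Matrix.linftyOpNormedRing Matrix.linftyOpNormedAlgebra

theorem HurwitzStable.eventually_spectralRadius_lt_one [Nonempty (Fin d)]
    (hH : HurwitzStable M) :
    ∀ᶠ s : ℝ in atTop, spectralRadius ℂ ((1 + s⁻¹ • M).map Complex.ofReal) < 1 := by
  filter_upwards [(M.map Complex.ofReal).finite_spectrum.eventually_all.mpr
    fun μ hμ => Complex.eventually_norm_one_add_inv_mul_lt_one (hH μ hμ)] with s hs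
  have hmap : (1 + s⁻¹ • M).map Complex.ofReal
      = algebraMap ℂ _ 1 + (s : ℂ)⁻¹ • M.map Complex.ofReal := by
    ext i j
    by_cases hij : i = j <;> simp [hij]
  refine spectrum.spectralRadius_lt_of_forall_lt _ fun z hz => ?_
  rw [hmap, ← spectrum.singleton_add_eq, spectrum.smul_eq_smul _ _ (spectrum.nonempty _)] at hz
  obtain ⟨_, rfl, _, ⟨μ, hμ, rfl⟩, rfl⟩ := hz
  simpa [← NNReal.coe_lt_coe] using hs μ hμ

theorem Metzler.exists_mul_eq_neg_one [Nonempty (Fin d)] (hM : Metzler M)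
    (hH : HurwitzStable M) :
    ∃ T : Matrix (Fin d) (Fin d) ℝ,
      M * T = -1 ∧ (∀ i j, 0 ≤ T i j) ∧ ∀ i, 0 < T i i := by
  obtain ⟨s, hρ, hs, hdiag⟩ := (hH.eventually_spectralRadius_lt_one.and
    ((eventually_gt_atTop 0).and (eventually_all.mpr fun i => eventually_ge_atTop (-M i i)))).exists
  set B := 1 + s⁻¹ • M with hB
  have hBnonneg : ∀ i j, 0 ≤ B i j := by
    intro i j
    rcases eq_or_ne i j with rfl | hij
    · have : 0 ≤ s⁻¹ * (s + M i i) := mul_nonneg (by positivity) (by linarith [hdiag i])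
      simpa [hB, mul_add, hs.ne'] using this
    · simpa [hB, hij] using mul_nonneg (inv_nonneg.mpr hs.le) (hM i j hij)
  have hsum : Summable (B ^ ·) := by
    refine Matrix.summable_of_summable_map_ofReal ?_
    have hpow (k : ℕ) : (B ^ k).map Complex.ofReal = B.map Complex.ofReal ^ k :=
      map_pow Complex.ofRealHom.mapMatrix B k
    simp only [hpow]
    exact spectrum.summable_pow_of_spectralRadius_lt_one hρ
  refine ⟨s⁻¹ • ∑' k, B ^ k, ?_, fun i j => ?_, fun i => ?_⟩
  · calc M * (s⁻¹ • ∑' k, B ^ k) = -((1 - B) * ∑' k, B ^ k) := by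
          rw [hB, mul_smul_comm, ← smul_mul_assoc, sub_add_cancel_left, neg_mul, neg_neg]
      _ = -1 := by rw [hsum.one_sub_mul_tsum_pow]
  · exact mul_nonneg (by positivity) (tsum_pow_apply_nonneg hBnonneg hsum i j)
  · exact mul_pos (by positivity) (one_pos.trans_le (one_le_tsum_pow_apply_self hBnonneg hsum i))

end MetzlerHurwitz

theorem stmt5 {d : ℕ} (M : Matrix (Fin d) (Fin d) ℝ)
    (hM : Metzler M) (hH : HurwitzStable M) :
    let v : Fin d → ℝ := (-1 : ℝ) ^ (d + 1) • ((fun _ => (1 : ℝ)) ᵥ* M.adjugate)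
    (∀ j, 0 < v j) ∧
    (v ᵥ* M = fun _ => -((-1 : ℝ) ^ d * M.det)) ∧
    (∀ j, (v ᵥ* M) j < 0) := by
  intro v
  have hdet := hH.neg_one_pow_mul_det_pos
  have hvM : v ᵥ* M = fun _ => -((-1 : ℝ) ^ d * M.det) := by
    rw [smul_vecMul, vecMul_vecMul, adjugate_mul, vecMul_smul, vecMul_one]
    funext j
    simp [pow_succ]
  refine ⟨fun j => ?_, hvM, fun j => by simpa [hvM] using hdet⟩
  have : Nonempty (Fin d) := ⟨j⟩
  obtain ⟨T, hMT, hT, hTdiag⟩ := hM.exists_mul_eq_neg_one hH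
  have hadj : M.adjugate = -M.det • T := by
    calc M.adjugate = M.adjugate * (M * -T) := by rw [mul_neg, hMT, neg_neg, mul_one]
      _ = -M.det • T := by
        rw [← mul_assoc, adjugate_mul, smul_mul_assoc, one_mul, smul_neg, neg_smul]
  have hcol : 0 < ∑ i, T i j :=
    Finset.sum_pos' (fun i _ => hT i j) ⟨j, Finset.mem_univ j, hTdiag j⟩
  have hvj : v j = (-1) ^ d * M.det * ∑ i, T i j := by
    simp [v, hadj, vecMul, dotProduct, Finset.mul_sum, pow_succ, mul_assoc]
  rw [hvj]
  positivity
end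

section
/- Let Θ ⊆ ℝ^N be a connected topological space and M : Θ → ℝ^{d×d} a continuous family of Metzler matrices. Suppose there exists θ* ∈ Θ with M(θ*) Hurwitz stable, and (-1)^d det(M(θ)) > 0 for all θ ∈ Θ. Then M(θ) is Hurwitz stable for every θ ∈ Θ. -/
open Matrix

/-!
For a Metzler matrix `M`, having a vector `v > 0` with `M v < 0` implies Hurwitz stability
(Gershgorin's theorem for `diag(v)⁻¹ M diag(v)`, whose row sums are negative) and, when `M` is
invertible, is equivalent to `-M⁻¹ ≥ 0` entrywise. Along a continuous family of invertible Metzler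
matrices the first condition is open and the second one closed, so on a connected parameter set
it holds everywhere as soon as it holds at one point. The same argument along the path
`M - t • 1`, `t ≥ 0`, which stays invertible when `M` is Hurwitz stable and admits `v = 1` for
large `t`, shows that a Hurwitz stable Metzler matrix has such a `v`.
-/

open Finset

variable {d : ℕ}

def HasPosVecMulVecNeg (M : Matrix (Fin d) (Fin d) ℝ) : Prop :=
  ∃ v : Fin d → ℝ, (∀ i, 0 < v i) ∧ ∀ i, (M *ᵥ v) i < 0

theorem HurwitzStable.of_conj {M P Q : Matrix (Fin d) (Fin d) ℝ} (hQP : Q * P = 1)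
    (hM : HurwitzStable (Q * M * P)) : HurwitzStable M := by
  have hmap (A B : Matrix (Fin d) (Fin d) ℝ) :
      (A * B).map Complex.ofReal = A.map (↑) * B.map (↑) :=
    Matrix.map_mul (f := Complex.ofRealHom)
  let u : (Matrix (Fin d) (Fin d) ℂ)ˣ :=
    ⟨P.map (↑), Q.map (↑), by rw [← hmap, mul_eq_one_comm.1 hQP]; simp,
      by rw [← hmap, hQP]; simp⟩
  have h : (Q * M * P).map Complex.ofReal =
      (↑u⁻¹ : Matrix (Fin d) (Fin d) ℂ) * M.map (↑) * (u : Matrix (Fin d) (Fin d) ℂ) := by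
    simp only [u, hmap, Units.inv_mk]
  intro μ hμ
  apply hM
  rw [h, spectrum.units_conjugate']
  exact hμ

theorem HurwitzStable.det_sub_smul_one_ne_zero {M : Matrix (Fin d) (Fin d) ℝ}
    (hM : HurwitzStable M) {t : ℝ} (ht : 0 ≤ t) : (M - t • 1).det ≠ 0 := by
  intro h
  refine (hM t ?_).not_ge (by simpa using ht)
  have hshift : algebraMap ℂ (Matrix (Fin d) (Fin d) ℂ) t - M.map (↑) =
      Complex.ofRealHom.mapMatrix (-(M - t • 1)) := by
    ext i j
    rcases eq_or_ne i j with rfl | hij <;> simp [algebraMap_eq_diagonal, one_apply, *]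
  rw [spectrum.mem_iff, isUnit_iff_isUnit_det, hshift, ← RingHom.map_det, det_neg, h]
  simp

namespace Metzler

variable {M : Matrix (Fin d) (Fin d) ℝ}

theorem sub_smul_one (hM : Metzler M) (t : ℝ) : Metzler (M - t • 1) := fun i j hij => by
  simpa [one_apply_ne hij] using hM i j hij

theorem mulVec_apply_nonneg_of_apply_eq_zero (hM : Metzler M) {y : Fin d → ℝ}
    (hy : ∀ j, 0 ≤ y j) {k : Fin d} (hk : y k = 0) : 0 ≤ (M *ᵥ y) k := by
  simp only [mulVec, dotProduct]
  refine sum_nonneg fun j _ => ?_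
  rcases eq_or_ne k j with rfl | hkj
  · simp [hk]
  · exact mul_nonneg (hM k j hkj) (hy j)

theorem hurwitzStable_of_sum_row_neg (hM : Metzler M) (h : ∀ i, ∑ j, M i j < 0) :
    HurwitzStable M := by
  intro μ hμ
  rw [← Matrix.spectrum_toLin', ← Module.End.hasEigenvalue_iff_mem_spectrum] at hμ
  obtain ⟨k, hk⟩ := eigenvalue_mem_ball hμ
  rw [Metric.mem_closedBall, dist_eq_norm] at hk
  have hoff : ∑ j ∈ univ.erase k, ‖(M.map Complex.ofReal) k j‖ = ∑ j ∈ univ.erase k, M k j :=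
    sum_congr rfl fun j hj => by
      simp [Complex.norm_real, abs_of_nonneg (hM k j (ne_of_mem_erase hj).symm)]
  have hre : μ.re - M k k ≤ ‖μ - (M.map Complex.ofReal) k k‖ := by
    simpa using Complex.re_le_norm (μ - M k k)
  have hrow := add_sum_erase univ (M k) (mem_univ k)
  linarith [h k]

theorem hurwitzStable_of_hasPosVecMulVecNeg (hM : Metzler M) (hMv : HasPosVecMulVecNeg M) :
    HurwitzStable M := by
  obtain ⟨v, hv, hMv⟩ := hMv
  have hQP : diagonal v⁻¹ * diagonal v = 1 := by
    simp [fun i => (hv i).ne']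
  have hentry (i j : Fin d) : (diagonal v⁻¹ * M * diagonal v) i j = (v i)⁻¹ * M i j * v j := by
    simp [diagonal_mul, mul_diagonal]
  refine HurwitzStable.of_conj hQP (hurwitzStable_of_sum_row_neg (fun i j hij => ?_) fun i => ?_)
  · rw [hentry]
    exact mul_nonneg (mul_nonneg (inv_nonneg.2 (hv i).le) (hM i j hij)) (hv j).le
  · have : ∑ j, (diagonal v⁻¹ * M * diagonal v) i j = (v i)⁻¹ * (M *ᵥ v) i := by
      simp only [hentry, mulVec, dotProduct, mul_sum, mul_assoc]
    rw [this]
    exact mul_neg_of_pos_of_neg (inv_pos.2 (hv i)) (hMv i)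

theorem nonneg_of_mulVec_nonpos (hM : Metzler M) (hMv : HasPosVecMulVecNeg M)
    {x : Fin d → ℝ} (hx : ∀ i, (M *ᵥ x) i ≤ 0) (i : Fin d) : 0 ≤ x i := by
  obtain ⟨v, hv, hMv⟩ := hMv
  by_contra! hxi
  -- The least `t` with `x + t • v ≥ 0` leaves a zero at some `k`, where `M` maps it below `0`.
  obtain ⟨k, -, hk⟩ := exists_max_image univ (fun j => -x j / v j) ⟨i, mem_univ i⟩
  set t := -x k / v k
  have ht : 0 < t := lt_of_lt_of_le (div_pos (neg_pos.2 hxi) (hv i)) (hk i (mem_univ i))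
  have hy : ∀ j, 0 ≤ (x + t • v) j := fun j => by
    have := hk j (mem_univ j)
    rw [div_le_iff₀ (hv j)] at this
    simp only [Pi.add_apply, Pi.smul_apply, smul_eq_mul]
    linarith
  have hyk : (x + t • v) k = 0 := by
    simp [t, (hv k).ne']
  have := hM.mulVec_apply_nonneg_of_apply_eq_zero hy hyk
  rw [mulVec_add, mulVec_smul, Pi.add_apply, Pi.smul_apply, smul_eq_mul] at this
  nlinarith [hx k, hMv k]

theorem hasPosVecMulVecNeg_iff_neg_inv_nonneg (hM : Metzler M) (hdet : IsUnit M.det) :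
    HasPosVecMulVecNeg M ↔ ∀ i j, 0 ≤ (-M⁻¹) i j := by
  constructor
  · intro hMv i j
    have hcol : M *ᵥ ((-M⁻¹) *ᵥ Pi.single j (1 : ℝ)) = -Pi.single j (1 : ℝ) := by
      rw [mulVec_mulVec, mul_neg, mul_nonsing_inv _ hdet, neg_mulVec, one_mulVec]
    have := hM.nonneg_of_mulVec_nonpos hMv (x := (-M⁻¹) *ᵥ Pi.single j (1 : ℝ))
      (fun k => by
        rw [hcol, Pi.neg_apply, neg_nonpos, Pi.single_apply]
        split_ifs <;> norm_num) i
    simpa [mulVec_single_one] using this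
  · intro hinv
    set v := (-M⁻¹) *ᵥ fun _ => 1
    have hMv : M *ᵥ v = -1 := by
      rw [mulVec_mulVec, mul_neg, mul_nonsing_inv _ hdet, neg_mulVec, one_mulVec]
      rfl
    have hv : ∀ i, 0 ≤ v i := fun i => by
      simpa [v, mulVec, dotProduct] using sum_nonneg fun j (_ : j ∈ univ) => hinv i j
    refine ⟨v, fun i => (hv i).lt_of_ne fun hvi => ?_, fun i => by simp [hMv]⟩
    have := hM.mulVec_apply_nonneg_of_apply_eq_zero hv hvi.symm
    rw [hMv] at this
    norm_num at this

end Metzler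

theorem HasPosVecMulVecNeg.of_isPreconnected {X : Type*} [TopologicalSpace X] {S : Set X}
    (hS : IsPreconnected S) {M : X → Matrix (Fin d) (Fin d) ℝ} (hcont : ContinuousOn M S)
    (hMetz : ∀ x ∈ S, Metzler (M x)) (hdet : ∀ x ∈ S, (M x).det ≠ 0) {x₀ : X} (hx₀ : x₀ ∈ S)
    (h₀ : HasPosVecMulVecNeg (M x₀)) : ∀ x ∈ S, HasPosVecMulVecNeg (M x) := by
  have := isPreconnected_iff_preconnectedSpace.mp hS
  let f : S → Matrix (Fin d) (Fin d) ℝ := S.domRestrict M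
  have hf : Continuous f := hcont.domRestrict
  have hf_inv : Continuous fun x => (f x)⁻¹ := continuous_iff_continuousAt.2 fun x =>
    (continuousAt_matrix_inv _ (by
      rw [Ring.inverse_eq_inv']
      exact continuousAt_inv₀ (hdet x x.2))).comp hf.continuousAt
  let T : Set S := {x | HasPosVecMulVecNeg (f x)}
  have hT_eq : T = ⋂ i, ⋂ j, {x | 0 ≤ (-(f x)⁻¹) i j} := by
    ext x
    simp only [T, Set.mem_ofPred_eq, Set.mem_iInter]
    exact (hMetz x x.2).hasPosVecMulVecNeg_iff_neg_inv_nonneg (isUnit_iff_ne_zero.2 (hdet x x.2))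
  have hT_closed : IsClosed T := by
    rw [hT_eq]
    exact isClosed_iInter fun i => isClosed_iInter fun j =>
      isClosed_le continuous_const (hf_inv.neg.matrix_elem i j)
  have hT_open : IsOpen T := by
    refine isOpen_iff_forall_mem_open.2 fun x ⟨v, hv, hxv⟩ =>
      ⟨{y | ∀ i, (f y *ᵥ v) i < 0}, fun y hy => ⟨v, hv, hy⟩, ?_, hxv⟩
    simp only [Set.ofPred_forall]
    exact isOpen_iInter_of_finite fun i =>
      isOpen_lt ((continuous_apply i).comp (hf.matrix_mulVec continuous_const)) continuous_const
  have hT : T = Set.univ := IsClopen.eq_univ ⟨hT_closed, hT_open⟩ ⟨⟨x₀, hx₀⟩, h₀⟩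
  exact fun x hx => Set.eq_univ_iff_forall.1 hT ⟨x, hx⟩

theorem Metzler.hasPosVecMulVecNeg_of_hurwitzStable {M : Matrix (Fin d) (Fin d) ℝ}
    (hM : Metzler M) (hH : HurwitzStable M) : HasPosVecMulVecNeg M := by
  set t₀ := 1 + ∑ i, |(M *ᵥ 1) i|
  have ht₀ : HasPosVecMulVecNeg (M - t₀ • 1) := by
    refine ⟨1, fun _ => one_pos, fun i => ?_⟩
    have := (le_abs_self _).trans (single_le_sum (fun j _ => abs_nonneg ((M *ᵥ 1) j)) (mem_univ i))
    simp only [sub_mulVec, smul_mulVec, one_mulVec, Pi.sub_apply, Pi.smul_apply, Pi.one_apply,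
      smul_eq_mul, mul_one, t₀]
    linarith
  simpa using HasPosVecMulVecNeg.of_isPreconnected isPreconnected_Ici
    (M := fun t => M - t • 1) (by fun_prop) (fun t _ => hM.sub_smul_one t)
    (fun t ht => hH.det_sub_smul_one_ne_zero ht) (x₀ := t₀) (Set.mem_Ici.2 (by positivity)) ht₀
    0 Set.self_mem_Ici

theorem stmt6 {N d : ℕ} (Θ : Set (Fin N → ℝ)) (hΘ : IsConnected Θ)
    (M : (Fin N → ℝ) → Matrix (Fin d) (Fin d) ℝ) (hcont : ContinuousOn M Θ)
    (hMetz : ∀ θ ∈ Θ, Metzler (M θ))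
    (hstab : ∃ θs ∈ Θ, HurwitzStable (M θs))
    (hdet : ∀ θ ∈ Θ, 0 < (-1 : ℝ) ^ d * (M θ).det) :
    ∀ θ ∈ Θ, HurwitzStable (M θ) := by
  obtain ⟨θs, hθs, hstable⟩ := hstab
  have hdet_ne (θ) (hθ : θ ∈ Θ) : (M θ).det ≠ 0 := fun h => by simpa [h] using hdet θ hθ
  intro θ hθ
  refine (hMetz θ hθ).hurwitzStable_of_hasPosVecMulVecNeg ?_
  exact HasPosVecMulVecNeg.of_isPreconnected hΘ.isPreconnected hcont hMetz hdet_ne hθs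
    ((hMetz θs hθs).hasPosVecMulVecNeg_of_hurwitzStable hstable) θ hθ
end

section
/- Let A_ρ ∈ ℝ^{d×d} be a Hurwitz-stable Metzler matrix, and let S_ct ∈ ℝ^{d×m}, W_ct ∈ ℝ^{m×d} be entrywise nonnegative. Then the matrix M := −W_ct A_ρ^{-1} S_ct is entrywise nonnegative, and det(I − D M) > 0 for all diagonal matrices D with positive diagonal entries if and only if the spectral radius ϱ(M) = 0. -/
/-!
For a Hurwitz-stable Metzler matrix `A`, the matrix `B = A + c • 1` is entrywise nonnegative and
has spectral radius `< c` once `c` is large, so the Neumann series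
`-A⁻¹ = c⁻¹ ∑ (c⁻¹ • B) ^ k` has nonnegative terms; hence `M = -W A⁻¹ S ≥ 0`.

If `ϱ(M) = r > 0`, then `r` itself is an eigenvalue (weak Perron–Frobenius), so
`det (1 - r⁻¹ • M) = 0`. The proof of that is Pringsheim's argument: if `r • 1 - M` were
invertible, the nonnegative series `∑ (s⁻¹ • M) ^ k`, which converges to `(1 - s⁻¹ • M)⁻¹` for
`s > r`, would stay bounded as `s ↓ r`, hence converge at `s = r`; then `(r⁻¹ • M) ^ k → 0`,
impossible for a matrix with an eigenvalue of modulus `1`.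

If `ϱ(M) = 0`, then `0 ≤ t • D M ≤ c • M` entrywise for `t ∈ [0, 1]`, so the Neumann series of
`t • D M` converges by comparison with that of `c • M`; thus `det (1 - t • D M)` never vanishes on
`[0, 1]`, and it is positive at `t = 1` because it is `1` at `t = 0`.
-/

open Matrix

open Filter Topology
open scoped NNReal ENNReal

section BanachAlgebra

variable {𝕜 A : Type*} [NormedField 𝕜] [NormedRing A] [NormedAlgebra 𝕜 A] [CompleteSpace A]

theorem spectralRadius_lt_top (a : A) : spectralRadius 𝕜 a < ⊤ := by
  refine lt_of_le_of_lt (b := ((‖a‖₊ * ‖(1 : A)‖₊ : ℝ≥0) : ℝ≥0∞)) ?_ ENNReal.coe_lt_top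
  refine iSup₂_le fun k hk => ?_
  exact_mod_cast spectrum.norm_le_norm_mul_of_mem hk

theorem spectrum.norm_lt_one_of_tendsto_pow_zero {a : A}
    (ha : Tendsto (a ^ ·) atTop (𝓝 0)) {μ : 𝕜} (hμ : μ ∈ spectrum 𝕜 a) : ‖μ‖ < 1 := by
  have hbound (k : ℕ) : ‖μ‖ ^ k ≤ ‖a ^ k‖ * ‖(1 : A)‖ := by
    simpa using spectrum.norm_le_norm_mul_of_mem (spectrum.pow_mem_pow a k hμ)
  have hlim : Tendsto (fun k => ‖a ^ k‖ * ‖(1 : A)‖) atTop (𝓝 0) := by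
    simpa using (tendsto_norm_zero.comp ha).mul_const ‖(1 : A)‖
  exact tendsto_pow_atTop_nhds_zero_iff.mp
    (squeeze_zero (fun k => by positivity) hbound hlim) |>.trans_le' (le_abs_self _)

end BanachAlgebra

theorem summable_norm_inv_smul_pow_of_spectralRadius_lt {A : Type*} [NormedRing A]
    [NormedAlgebra ℂ A] [CompleteSpace A] {a : A} {z : ℂ} (h : spectralRadius ℂ a < ‖z‖₊) :
    Summable fun k => ‖(z⁻¹ • a) ^ k‖ := by
  obtain ⟨q, hρq, hqz⟩ := ENNReal.lt_iff_exists_nnreal_btwn.mp h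
  have hqz' : (q : ℝ) < ‖z‖ := by exact_mod_cast hqz
  have hz : 0 < ‖z‖ := q.coe_nonneg.trans_lt hqz'
  have hev : ∀ᶠ k : ℕ in atTop, ‖a ^ k‖ ≤ (q : ℝ) ^ k := by
    filter_upwards [(spectrum.pow_nnnorm_pow_one_div_tendsto_nhds_spectralRadius a).eventually_lt_const
      hρq, eventually_gt_atTop 0] with k hk hk0
    have := ENNReal.rpow_le_rpow hk.le (show (0 : ℝ) ≤ k by positivity)
    rw [← ENNReal.rpow_mul, one_div_mul_cancel (by positivity), ENNReal.rpow_one,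
      ENNReal.rpow_natCast] at this
    exact_mod_cast this
  refine (summable_geometric_of_lt_one (by positivity)
    ((div_lt_one hz).mpr hqz')).of_norm_bounded_eventually_nat ?_
  filter_upwards [hev] with k hk
  rw [norm_norm, smul_pow, norm_smul, norm_pow, norm_inv, div_pow, div_eq_inv_mul, inv_pow]
  gcongr

theorem Complex.eventually_norm_ofReal_add_lt {μ : ℂ} (hμ : μ.re < 0) :
    ∀ᶠ c : ℝ in atTop, ‖(c : ℂ) + μ‖ < c := by
  filter_upwards [eventually_gt_atTop (‖μ‖ ^ 2 / (-2 * μ.re)), eventually_gt_atTop 0]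
    with c hc hc0
  have hsq : ‖(c : ℂ) + μ‖ ^ 2 = c ^ 2 + 2 * c * μ.re + ‖μ‖ ^ 2 := by
    rw [Complex.sq_norm, Complex.sq_norm, Complex.normSq_apply, Complex.normSq_apply]
    simp only [Complex.add_re, Complex.add_im, Complex.ofReal_re, Complex.ofReal_im]
    ring
  rw [div_lt_iff₀ (by linarith)] at hc
  refine (pow_lt_pow_iff_left₀ (norm_nonneg _) hc0.le two_ne_zero).mp ?_
  nlinarith

namespace Matrix

variable {l m n R : Type*}

section Entrywise

variable [Semiring R] [PartialOrder R] [IsOrderedRing R]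

theorem mul_apply_nonneg [Fintype m] {P : Matrix l m R} {Q : Matrix m n R}
    (hP : ∀ i j, 0 ≤ P i j) (hQ : ∀ i j, 0 ≤ Q i j) (i : l) (j : n) : 0 ≤ (P * Q) i j :=
  Finset.sum_nonneg fun k _ => mul_nonneg (hP i k) (hQ k j)

theorem pow_apply_le_pow_apply [Fintype n] [DecidableEq n] {P Q : Matrix n n R}
    (hP : ∀ i j, 0 ≤ P i j) (hPQ : ∀ i j, P i j ≤ Q i j) (k : ℕ) (i j : n) :
    (P ^ k) i j ≤ (Q ^ k) i j := by
  induction k generalizing i j with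
  | zero => rfl
  | succ k ih =>
    simp only [pow_succ, mul_apply]
    exact Finset.sum_le_sum fun l _ =>
      mul_le_mul (ih i l) (hPQ l j) (hP l j) ((pow_apply_nonneg hP k i l).trans (ih i l))

end Entrywise

variable [Fintype n] [DecidableEq n]

theorem summable_pow_of_le {P Q : Matrix n n ℝ} (hP : ∀ i j, 0 ≤ P i j)
    (hPQ : ∀ i j, P i j ≤ Q i j) (hQ : Summable (Q ^ ·)) : Summable (P ^ ·) :=
  Pi.summable.mpr fun i => Pi.summable.mpr fun j =>
    (Pi.summable.mp (Pi.summable.mp hQ i) j).of_nonneg_of_le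
      (fun k => pow_apply_nonneg hP k i j) (fun k => pow_apply_le_pow_apply hP hPQ k i j)

section Neumann

variable [CommRing R] [TopologicalSpace R] [IsTopologicalRing R] [T2Space R]

theorem hasSum_pow_of_summable {X : Matrix n n R} (h : Summable (X ^ ·)) :
    HasSum (X ^ ·) (1 - X)⁻¹ := by
  rw [inv_eq_left_inv h.tsum_pow_mul_one_sub]
  exact h.hasSum

theorem isUnit_det_one_sub_of_summable {X : Matrix n n R} (h : Summable (X ^ ·)) :
    IsUnit (1 - X).det :=
  isUnit_det_of_left_inverse h.tsum_pow_mul_one_sub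

end Neumann

theorem inv_one_sub_apply_nonneg_s12 {X : Matrix n n ℝ} (hX : ∀ i j, 0 ≤ X i j)
    (h : Summable (X ^ ·)) (i j : n) : 0 ≤ (1 - X)⁻¹ i j := by
  have hsum := hasSum_pow_of_summable h
  exact (Pi.hasSum.mp (Pi.hasSum.mp hsum i) j).nonneg fun k => pow_apply_nonneg hX k i j

theorem det_one_sub_pos_of_forall_det_ne_zero {N : Matrix n n ℝ}
    (h : ∀ t ∈ Set.Icc (0 : ℝ) 1, (1 - t • N).det ≠ 0) : 0 < (1 - N).det := by
  by_contra! hle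
  have hcont : Continuous fun t : ℝ => (1 - t • N).det := by fun_prop
  obtain ⟨t, ht, ht0⟩ := intermediate_value_Icc' zero_le_one hcont.continuousOn
    (Set.mem_Icc.mpr ⟨by simpa using hle, by simp⟩)
  exact h t ht ht0

section SpectralRadius

attribute [local instance] Matrix.linftyOpNormedAddCommGroup Matrix.linftyOpNormedRing
  Matrix.linftyOpNormedSpace Matrix.linftyOpNormedAlgebra

theorem map_ofReal_smul_pow (c : ℝ) (P : Matrix n n ℝ) (k : ℕ) :
    ((c • P) ^ k).map Complex.ofReal = ((c : ℂ) • P.map Complex.ofReal) ^ k := by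
  have hsmul : (c • P).map Complex.ofReal = (c : ℂ) • P.map Complex.ofReal := by
    ext i j
    simp
  exact hsmul ▸ map_pow Complex.ofRealHom.mapMatrix (c • P) k

theorem spectralRadius_map_ofReal_ne_top (P : Matrix n n ℝ) :
    spectralRadius ℂ (P.map Complex.ofReal) ≠ ⊤ :=
  (spectralRadius_lt_top _).ne

theorem summable_inv_smul_pow_of_spectralRadius_lt {P : Matrix n n ℝ} {r : ℝ} (hr : 0 ≤ r)
    (h : spectralRadius ℂ (P.map Complex.ofReal) < ENNReal.ofReal r) :
    Summable fun k => (r⁻¹ • P) ^ k := by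
  rw [← Real.enorm_eq_ofReal hr, enorm_eq_nnnorm, ← Complex.nnnorm_real] at h
  have hmap : (fun k => ((r⁻¹ • P) ^ k).map Complex.ofReal) =
      (((r : ℂ)⁻¹ • P.map Complex.ofReal) ^ ·) := by
    funext k
    rw [map_ofReal_smul_pow, Complex.ofReal_inv]
  have hsum : Summable fun k => ((r⁻¹ • P) ^ k).map Complex.ofReal :=
    hmap ▸ (summable_norm_inv_smul_pow_of_spectralRadius_lt h).of_norm
  simpa [Matrix.map_map, Function.comp_def] using
    hsum.map (Complex.reLm.mapMatrix (m := n) (n := n))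
      (continuous_id.matrix_map Complex.continuous_re)

theorem spectralRadius_add_smul_one_lt {A : Matrix n n ℝ} {c : ℝ} (hc : 0 < c)
    (h : ∀ μ ∈ spectrum ℂ (A.map Complex.ofReal), ‖(c : ℂ) + μ‖ < c) :
    spectralRadius ℂ ((A + c • 1).map Complex.ofReal) < ENNReal.ofReal c := by
  have hshift : (A + c • 1).map Complex.ofReal =
      A.map Complex.ofReal + algebraMap ℂ (Matrix n n ℂ) c := by
    ext i j
    by_cases hij : i = j <;> simp [hij, Algebra.algebraMap_eq_smul_one]
  rw [hshift, spectralRadius, ← spectrum.add_singleton_eq]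
  rcases (spectrum ℂ (A.map Complex.ofReal)).eq_empty_or_nonempty with hempty | hne
  · simp [hempty, hc]
  obtain ⟨_, ⟨μ, hμ, _, rfl, rfl⟩, hmax⟩ := Set.exists_max_image _ (‖·‖₊)
    ((finite_spectrum _).add (Set.finite_singleton _)) (hne.add (Set.singleton_nonempty _))
  refine (iSup₂_le fun ν hν => ENNReal.coe_le_coe.mpr (hmax ν hν)).trans_lt ?_
  rw [← ENNReal.ofReal_coe_nnreal, coe_nnnorm, ENNReal.ofReal_lt_ofReal_iff hc]
  simpa only [add_comm] using h μ hμ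

theorem summable_inv_smul_pow_of_det_ne_zero {P : Matrix n n ℝ} (hP : ∀ i j, 0 ≤ P i j)
    {r : ℝ} (hr : 0 < r) (hρ : spectralRadius ℂ (P.map Complex.ofReal) ≤ ENNReal.ofReal r)
    (hdet : (1 - r⁻¹ • P).det ≠ 0) : Summable fun k => (r⁻¹ • P) ^ k := by
  have hPs {s : ℝ} (hs : 0 < s) (i j : n) : 0 ≤ (s⁻¹ • P) i j :=
    mul_nonneg (inv_nonneg.mpr hs.le) (hP i j)
  have hinv : ContinuousAt (fun s : ℝ => (1 - s⁻¹ • P)⁻¹) r := by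
    refine ContinuousAt.comp (g := Inv.inv) (continuousAt_matrix_inv _ ?_)
      (by fun_prop (disch := positivity))
    rw [Ring.inverse_eq_inv']
    exact continuousAt_inv₀ hdet
  have hsum {s : ℝ} (hs : r < s) : HasSum (fun k => (s⁻¹ • P) ^ k) (1 - s⁻¹ • P)⁻¹ :=
    hasSum_pow_of_summable <| summable_inv_smul_pow_of_spectralRadius_lt (by linarith) <|
      hρ.trans_lt ((ENNReal.ofReal_lt_ofReal_iff (by linarith)).mpr hs)
  have hbound (i j : n) (N : ℕ) :
      ∑ k ∈ Finset.range N, ((r⁻¹ • P) ^ k) i j ≤ (1 - r⁻¹ • P)⁻¹ i j := by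
    have hpartial : ContinuousAt (fun s : ℝ => ∑ k ∈ Finset.range N, ((s⁻¹ • P) ^ k) i j) r := by
      fun_prop (disch := positivity)
    refine le_of_tendsto_of_tendsto (b := 𝓝[>] r) (hpartial.tendsto.mono_left nhdsWithin_le_nhds)
      ((hinv.tendsto.apply_nhds i).apply_nhds j |>.mono_left nhdsWithin_le_nhds) ?_
    filter_upwards [self_mem_nhdsWithin] with s hs
    exact sum_le_hasSum _ (fun k _ => pow_apply_nonneg (hPs (hr.trans hs)) k i j)
      (Pi.hasSum.mp (Pi.hasSum.mp (hsum hs) i) j)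
  exact Pi.summable.mpr fun i => Pi.summable.mpr fun j =>
    summable_of_sum_range_le (fun k => pow_apply_nonneg (hPs hr) k i j) (hbound i j)

theorem det_one_sub_inv_smul_eq_zero_of_spectralRadius_eq {P : Matrix n n ℝ}
    (hP : ∀ i j, 0 ≤ P i j) {r : ℝ} (hr : 0 < r)
    (hρ : spectralRadius ℂ (P.map Complex.ofReal) = ENNReal.ofReal r) :
    (1 - r⁻¹ • P).det = 0 := by
  by_contra hdet
  have hne : (spectrum ℂ (P.map Complex.ofReal)).Nonempty := by
    by_contra hempty
    rw [Set.not_nonempty_iff_eq_empty] at hempty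
    simp [spectralRadius, hempty, eq_comm] at hρ
    linarith
  obtain ⟨μ, hμ, hμr⟩ := spectrum.exists_nnnorm_eq_spectralRadius_of_nonempty hne
  have hμnorm : ‖μ‖ = r := by
    rw [hρ, ← ENNReal.ofReal_coe_nnreal, coe_nnnorm] at hμr
    exact (ENNReal.ofReal_eq_ofReal_iff (norm_nonneg _) hr.le).mp hμr
  have hlim : Tendsto (fun k => ((r : ℂ)⁻¹ • P.map Complex.ofReal) ^ k) atTop (𝓝 0) := by
    have := ((continuous_id.matrix_map Complex.continuous_ofReal).tendsto 0).comp
      (summable_inv_smul_pow_of_det_ne_zero hP hr hρ.le hdet).tendsto_atTop_zero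
    simpa [Function.comp_def, map_ofReal_smul_pow] using this
  have hμ' : (r : ℂ)⁻¹ • μ ∈ spectrum ℂ ((r : ℂ)⁻¹ • P.map Complex.ofReal) := by
    have hr' : (r : ℂ)⁻¹ ≠ 0 := by simpa using hr.ne'
    exact spectrum.smul_mem_smul_iff (r := Units.mk0 _ hr') |>.mpr hμ
  have := spectrum.norm_lt_one_of_tendsto_pow_zero hlim hμ'
  rw [norm_smul, norm_inv, hμnorm, Complex.norm_real, Real.norm_of_nonneg hr.le,
    inv_mul_cancel₀ hr.ne'] at this
  exact lt_irrefl _ this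

theorem inv_apply_nonpos_of_spectralRadius_add_smul_one_lt {A : Matrix n n ℝ} {c : ℝ}
    (hc : 0 < c) (hB : ∀ k l, 0 ≤ (A + c • 1) k l)
    (hρ : spectralRadius ℂ ((A + c • 1).map Complex.ofReal) < ENNReal.ofReal c) (i j : n) :
    A⁻¹ i j ≤ 0 := by
  set B := A + c • 1
  have hX (k l : n) : 0 ≤ (c⁻¹ • B) k l := mul_nonneg (inv_nonneg.mpr hc.le) (hB k l)
  have hsum := summable_inv_smul_pow_of_spectralRadius_lt hc.le hρ
  have hinv : A⁻¹ = -(c⁻¹ • (1 - c⁻¹ • B)⁻¹) := by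
    refine inv_eq_right_inv ?_
    have hAB : A = -(c • (1 - c⁻¹ • B)) := by
      simp only [B, smul_sub, smul_smul, mul_inv_cancel₀ hc.ne', one_smul]
      abel
    rw [hAB, neg_mul_neg, smul_mul_smul_comm, mul_inv_cancel₀ hc.ne', one_smul,
      mul_nonsing_inv _ (isUnit_det_one_sub_of_summable hsum)]
  rw [hinv, neg_apply, smul_apply, smul_eq_mul, neg_nonpos]
  exact mul_nonneg (inv_nonneg.mpr hc.le) (inv_one_sub_apply_nonneg_s12 hX hsum i j)

theorem det_one_sub_pos_of_le_smul {M N : Matrix n n ℝ}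
    (hM : spectralRadius ℂ (M.map Complex.ofReal) = 0) (hN : ∀ i j, 0 ≤ N i j) {c : ℝ}
    (hc : 0 < c) (hNM : ∀ i j, N i j ≤ c * M i j) : 0 < (1 - N).det := by
  have hsum : Summable fun k => (c • M) ^ k := by
    simpa using summable_inv_smul_pow_of_spectralRadius_lt (inv_nonneg.mpr hc.le)
      (hM ▸ ENNReal.ofReal_pos.mpr (inv_pos.mpr hc))
  refine det_one_sub_pos_of_forall_det_ne_zero fun t ⟨ht0, ht1⟩ => ?_
  have htN (i j : n) : 0 ≤ (t • N) i j := mul_nonneg ht0 (hN i j)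
  have htNM (i j : n) : (t • N) i j ≤ (c • M) i j :=
    (mul_le_of_le_one_left (hN i j) ht1).trans (hNM i j)
  exact (isUnit_det_one_sub_of_summable (summable_pow_of_le htN htNM hsum)).ne_zero

end SpectralRadius

end Matrix

theorem Metzler.eventually_add_smul_one_nonneg {d : ℕ} {A : Matrix (Fin d) (Fin d) ℝ}
    (hA : Metzler A) : ∀ᶠ c : ℝ in atTop, ∀ k l, 0 ≤ (A + c • 1) k l := by
  filter_upwards [eventually_all.mpr fun k => eventually_ge_atTop (-A k k)] with c hc k l
  by_cases hkl : k = l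
  · subst hkl
    simp only [Matrix.add_apply, Matrix.smul_apply, one_apply_eq, smul_eq_mul, mul_one]
    linarith [hc k]
  · simpa [hkl] using hA k l hkl

theorem HurwitzStable.eventually_spectralRadius_add_smul_one_lt {d : ℕ}
    {A : Matrix (Fin d) (Fin d) ℝ} (hH : HurwitzStable A) :
    ∀ᶠ c : ℝ in atTop, spectralRadius ℂ ((A + c • 1).map Complex.ofReal) < ENNReal.ofReal c := by
  filter_upwards [(finite_spectrum _).eventually_all.mpr fun μ hμ =>
    Complex.eventually_norm_ofReal_add_lt (hH μ hμ), eventually_gt_atTop 0] with c hshift hc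
  exact spectralRadius_add_smul_one_lt hc hshift

theorem Metzler.inv_apply_nonpos {d : ℕ} {A : Matrix (Fin d) (Fin d) ℝ} (hA : Metzler A)
    (hH : HurwitzStable A) (i j : Fin d) : A⁻¹ i j ≤ 0 := by
  obtain ⟨c, hc, hB, hρ⟩ := ((eventually_gt_atTop 0).and
    (hA.eventually_add_smul_one_nonneg.and hH.eventually_spectralRadius_add_smul_one_lt)).exists
  exact inv_apply_nonpos_of_spectralRadius_add_smul_one_lt hc hB hρ i j

theorem stmt12 {d m : ℕ} (A : Matrix (Fin d) (Fin d) ℝ)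
    (hMz : Metzler A) (hH : HurwitzStable A)
    (S : Matrix (Fin d) (Fin m) ℝ) (W : Matrix (Fin m) (Fin d) ℝ)
    (hS : ∀ i j, 0 ≤ S i j) (hW : ∀ i j, 0 ≤ W i j) :
    (∀ i j, 0 ≤ (-(W * A⁻¹ * S)) i j) ∧
    ((∀ dv : Fin m → ℝ, (∀ i, 0 < dv i) →
        0 < (1 - Matrix.diagonal dv * (-(W * A⁻¹ * S))).det) ↔
      spectralRadius ℂ ((-(W * A⁻¹ * S)).map Complex.ofReal) = 0) := by
  have hM : ∀ i j, 0 ≤ (-(W * A⁻¹ * S)) i j := by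
    rw [← Matrix.neg_mul, ← Matrix.mul_neg]
    exact mul_apply_nonneg (mul_apply_nonneg hW fun k l => neg_nonneg.mpr
      (hMz.inv_apply_nonpos hH k l)) hS
  set M := -(W * A⁻¹ * S)
  refine ⟨hM, fun hpos => ?_, fun hρ dv hdv => ?_⟩
  · by_contra hρ
    set r := (spectralRadius ℂ (M.map Complex.ofReal)).toReal
    have hr : 0 < r := ENNReal.toReal_pos hρ (spectralRadius_map_ofReal_ne_top _)
    have hdet := det_one_sub_inv_smul_eq_zero_of_spectralRadius_eq hM hr
      (ENNReal.ofReal_toReal (spectralRadius_map_ofReal_ne_top _)).symm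
    have := hpos (fun _ => r⁻¹) fun _ => inv_pos.mpr hr
    rw [← smul_eq_diagonal_mul, hdet] at this
    exact lt_irrefl _ this
  · obtain ⟨c, hc⟩ := Finite.exists_le dv
    refine det_one_sub_pos_of_le_smul hρ (c := max c 1) (fun i j => ?_) (by positivity)
      fun i j => ?_
    all_goals rw [diagonal_mul]
    · exact mul_nonneg (hdv i).le (hM i j)
    · exact mul_le_mul_of_nonneg_right ((hc i).trans (le_max_left _ _)) (hM i j)
end

section
/- Let A ∈ ℝ^{d×d} be a Hurwitz-stable Metzler matrix, S ∈ ℝ^{d×m} and W ∈ ℝ^{m×d} entrywise nonnegative with ϱ(W A^{-1} S) = 0. Then there exists ε > 0 such that A + ε S W is Hurwitz stable. -/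
open Matrix

/-- Upper semicontinuity of the spectrum at the open left half-plane, in a complex
Banach algebra: if the spectrum of `a` lies in the open left half-plane, then so does
the spectrum of `a + ε • b` for all sufficiently small `ε > 0`. -/
lemma halfplane_stable {𝔸 : Type*} [NormedRing 𝔸] [NormedAlgebra ℂ 𝔸] [CompleteSpace 𝔸]
    [NormOneClass 𝔸] (a b : 𝔸) (ha : ∀ μ ∈ spectrum ℂ a, μ.re < 0) :
    ∃ ε : ℝ, 0 < ε ∧ ∀ μ ∈ spectrum ℂ (a + (ε : ℂ) • b), μ.re < 0 := by
  set R : ℝ := ‖a‖ + ‖b‖ + 1 with hR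
  set K : Set ℂ := {z : ℂ | 0 ≤ z.re ∧ ‖z‖ ≤ R} with hKdef
  -- every point of `K` is in the resolvent set of `a`
  have hunit : ∀ z ∈ K, IsUnit (algebraMap ℂ 𝔸 z - a) := by
    intro z hz
    by_contra h
    have hzs : z ∈ spectrum ℂ a := spectrum.mem_iff.mpr h
    exact absurd (ha z hzs) (not_lt.mpr hz.1)
  -- `K` is compact
  have hKc : IsCompact K := by
    have hclosed : IsClosed K := by
      have : K = {z : ℂ | 0 ≤ z.re} ∩ {z : ℂ | ‖z‖ ≤ R} := rfl
      rw [this]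
      exact (isClosed_le continuous_const Complex.continuous_re).inter
        (isClosed_le continuous_norm continuous_const)
    have hbdd : Bornology.IsBounded K := by
      apply (Metric.isBounded_closedBall (x := (0 : ℂ)) (r := R)).subset
      intro z hz
      simpa [Metric.mem_closedBall, dist_eq_norm] using hz.2
    exact Metric.isCompact_of_isClosed_isBounded hclosed hbdd
  -- the resolvent is bounded on `K`
  have hcont : ContinuousOn (fun z : ℂ => Ring.inverse (algebraMap ℂ 𝔸 z - a)) K := by
    intro z hz
    obtain ⟨u, hu⟩ := hunit z hz
    have h1 : Continuous (fun z : ℂ => algebraMap ℂ 𝔸 z - a) :=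
      (continuous_algebraMap ℂ 𝔸).sub continuous_const
    have h2 : ContinuousAt Ring.inverse (algebraMap ℂ 𝔸 z - a) := by
      rw [← hu]; exact NormedRing.inverse_continuousAt u
    exact (ContinuousAt.comp (g := Ring.inverse) (f := fun z : ℂ => algebraMap ℂ 𝔸 z - a) h2 h1.continuousAt).continuousWithinAt
  obtain ⟨C, hC⟩ := hKc.exists_bound_of_continuousOn hcont
  set C' : ℝ := max C 0 with hC'
  have hC'0 : 0 ≤ C' := le_max_right _ _
  set D : ℝ := (C' + 1) * (‖b‖ + 1) with hD
  have hD0 : 0 < D := by positivity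
  refine ⟨min 1 (1 / (2 * D)), lt_min one_pos (by positivity), ?_⟩
  set ε : ℝ := min 1 (1 / (2 * D)) with hε
  have hε0 : 0 < ε := lt_min one_pos (by positivity)
  have hε1 : ε ≤ 1 := min_le_left _ _
  have hε2 : ε ≤ 1 / (2 * D) := min_le_right _ _
  intro μ hμ
  by_contra hre
  push_neg at hre
  -- `μ` lies in `K`
  have hμnorm : ‖μ‖ ≤ R := by
    have h1 : ‖μ‖ ≤ ‖a + (ε : ℂ) • b‖ := spectrum.norm_le_norm_of_mem hμ
    have h2 : ‖a + (ε : ℂ) • b‖ ≤ ‖a‖ + ‖(ε : ℂ) • b‖ := norm_add_le _ _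
    have h3 : ‖(ε : ℂ) • b‖ ≤ ‖b‖ := by
      rw [norm_smul, Complex.norm_real, Real.norm_eq_abs, abs_of_pos hε0]
      nlinarith [norm_nonneg b]
    have : (0:ℝ) ≤ ‖b‖ := norm_nonneg b
    simp only [hR]
    linarith
  have hμK : μ ∈ K := ⟨hre, hμnorm⟩
  obtain hu := hunit μ hμK
  set x : 𝔸 := algebraMap ℂ 𝔸 μ - a with hx
  -- the perturbation term is small
  have hnormy : ‖Ring.inverse x * b‖ ≤ D := by
    have h1 : ‖Ring.inverse x * b‖ ≤ ‖Ring.inverse x‖ * ‖b‖ := norm_mul_le _ _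
    have h2 : ‖Ring.inverse x‖ ≤ C := hC μ hμK
    have h3 : ‖Ring.inverse x‖ ≤ C' := h2.trans (le_max_left _ _)
    have h4 : (0:ℝ) ≤ ‖b‖ := norm_nonneg b
    have h5 : (0:ℝ) ≤ ‖Ring.inverse x‖ := norm_nonneg _
    nlinarith
  have hlt : ‖(ε : ℂ) • (Ring.inverse x * b)‖ < 1 := by
    rw [norm_smul, Complex.norm_real, Real.norm_eq_abs, abs_of_pos hε0]
    have h1 : ε * ‖Ring.inverse x * b‖ ≤ (1 / (2 * D)) * D := by
      apply mul_le_mul hε2 hnormy (norm_nonneg _)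
      positivity
    have h2 : (1 / (2 * D)) * D = 1 / 2 := by field_simp
    linarith
  have hu2 : IsUnit ((1 : 𝔸) - (ε : ℂ) • (Ring.inverse x * b)) :=
    isUnit_one_sub_of_norm_lt_one hlt
  -- factorization of the resolvent element of `a + ε • b`
  have hfact : x * ((1 : 𝔸) - (ε : ℂ) • (Ring.inverse x * b))
      = algebraMap ℂ 𝔸 μ - (a + (ε : ℂ) • b) := by
    have hxx : x * (Ring.inverse x * b) = b := by
      rw [← mul_assoc, Ring.mul_inverse_cancel x hu, one_mul]
    rw [mul_sub, mul_one, mul_smul_comm, hxx, hx, sub_sub]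
  have : IsUnit (algebraMap ℂ 𝔸 μ - (a + (ε : ℂ) • b)) := by
    rw [← hfact]; exact hu.mul hu2
  exact (spectrum.mem_iff.mp hμ) this

theorem stmt14 {d m : ℕ} (A : Matrix (Fin d) (Fin d) ℝ)
    (hMz : Metzler A) (hH : HurwitzStable A)
    (S : Matrix (Fin d) (Fin m) ℝ) (W : Matrix (Fin m) (Fin d) ℝ)
    (hS : ∀ i j, 0 ≤ S i j) (hW : ∀ i j, 0 ≤ W i j)
    (hρ : spectralRadius ℂ ((W * A⁻¹ * S).map Complex.ofReal) = 0) :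
    ∃ ε : ℝ, 0 < ε ∧ HurwitzStable (A + ε • (S * W)) := by
  rcases Nat.eq_zero_or_pos d with hd | hd
  · subst hd
    refine ⟨1, one_pos, ?_⟩
    intro μ hμ
    haveI : Subsingleton (Matrix (Fin 0) (Fin 0) ℂ) :=
      ⟨fun a b => by ext i j; exact i.elim0⟩
    exact absurd (isUnit_of_subsingleton _) (spectrum.mem_iff.mp hμ)
  · haveI : Nonempty (Fin d) := ⟨⟨0, hd⟩⟩
    letI : NormedRing (Matrix (Fin d) (Fin d) ℂ) := Matrix.linftyOpNormedRing
    letI : NormedAlgebra ℂ (Matrix (Fin d) (Fin d) ℂ) := Matrix.linftyOpNormedAlgebra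
    letI : NormOneClass (Matrix (Fin d) (Fin d) ℂ) := Matrix.linfty_opNormOneClass
    letI : CompleteSpace (Matrix (Fin d) (Fin d) ℂ) := FiniteDimensional.complete ℂ _
    obtain ⟨ε, hε0, hε⟩ := halfplane_stable (A.map Complex.ofReal)
      ((S * W).map Complex.ofReal) hH
    refine ⟨ε, hε0, ?_⟩
    intro μ hμ
    apply hε μ
    have hmap : (A + ε • (S * W)).map Complex.ofReal
        = A.map Complex.ofReal + (ε : ℂ) • ((S * W).map Complex.ofReal) := by
      ext i j
      simp [Matrix.map_apply, Matrix.add_apply, Matrix.smul_apply, smul_eq_mul,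
        Complex.ofReal_add, Complex.ofReal_mul]
    rwa [hmap] at hμ
end

section
/- Consider the 3×3 Metzler matrix A⁺(k₁) with rows [−γ₁, 0, k₁], [k₂, −γ₂, 0], [0, k₃, −k₁], where γ₁, γ₂, k₂, k₃ > 0 are fixed and k₁ > 0. Then det(A⁺(k₁)) = k₁(k₂k₃ − γ₁γ₂). Moreover, if k₂k₃ < γ₁γ₂, then A⁺(k₁) is Hurwitz stable for every k₁ > 0, while if k₂k₃ ≥ γ₁γ₂ then A⁺(k₁) is not Hurwitz stable for any k₁ > 0. -/
open Matrix

lemma spec_iff17 (M : Matrix (Fin 3) (Fin 3) ℂ) (μ : ℂ) :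
    μ ∈ spectrum ℂ M ↔ (μ • (1 : Matrix (Fin 3) (Fin 3) ℂ) - M).det = 0 := by
  rw [spectrum.mem_iff, Matrix.isUnit_iff_isUnit_det, isUnit_iff_ne_zero, not_ne_iff]
  congr! 2
  simp [Algebra.algebraMap_eq_smul_one]

lemma cubic_root17 (a b c : ℝ) (ha : 0 ≤ a) (hb : 0 ≤ b) (hc : c ≤ 0) :
    ∃ x : ℝ, 0 ≤ x ∧ x^3 + a*x^2 + b*x + c = 0 := by
  set f : ℝ → ℝ := fun x => x^3 + a*x^2 + b*x + c with hf
  set X : ℝ := max 1 (-c) with hX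
  have hX1 : (1:ℝ) ≤ X := le_max_left _ _
  have hXc : -c ≤ X := le_max_right _ _
  have hX0 : (0:ℝ) ≤ X := le_trans zero_le_one hX1
  have hfX : 0 ≤ f X := by
    have h3 : X ≤ X^3 := by
      nlinarith [mul_nonneg (mul_nonneg hX0 (by linarith : (0:ℝ) ≤ X - 1)) (by linarith : (0:ℝ) ≤ X + 1)]
    simp only [hf]
    nlinarith [mul_nonneg ha (sq_nonneg X), mul_nonneg hb hX0]
  have hcont : ContinuousOn f (Set.Icc 0 X) := by fun_prop
  have hf0 : f 0 ≤ 0 := by simp only [hf]; norm_num; linarith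
  have : (0:ℝ) ∈ Set.Icc (f 0) (f X) := ⟨hf0, hfX⟩
  obtain ⟨x, hx, hfx⟩ := intermediate_value_Icc hX0 hcont this
  exact ⟨x, hx.1, hfx⟩

lemma cubic_stable17 (a b c : ℝ) (ha : 0 < a) (hb : 0 < b) (hc : 0 < c)
    (habc : c < a * b) (μ : ℂ) (h : μ^3 + a*μ^2 + b*μ + c = 0) : μ.re < 0 := by
  set x := μ.re; set y := μ.im
  have hre : x^3 - 3*x*y^2 + a*(x^2 - y^2) + b*x + c = 0 := by
    have := congrArg Complex.re h
    simp [Complex.add_re, Complex.mul_re, Complex.mul_im, pow_succ, pow_zero] at this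
    ring_nf at this ⊢
    linarith [this]
  have him : y * (3*x^2 - y^2 + 2*a*x + b) = 0 := by
    have := congrArg Complex.im h
    simp [Complex.add_im, Complex.mul_re, Complex.mul_im, pow_succ, pow_zero] at this
    ring_nf at this ⊢
    linarith [this]
  by_contra hx
  push_neg at hx
  rcases mul_eq_zero.mp him with hy | hy
  · rw [hy] at hre
    nlinarith [pow_nonneg hx 3, mul_nonneg (mul_nonneg ha.le hx) hx, mul_nonneg hb.le hx]
  · nlinarith [pow_nonneg hx 3, mul_nonneg (mul_nonneg ha.le hx) hx, mul_nonneg hb.le hx,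
      mul_nonneg (mul_nonneg ha.le ha.le) hx, sq_nonneg x]

lemma charpoly17 (γ1 γ2 k2 k3 k1 : ℝ) (μ : ℂ) :
    (μ • (1 : Matrix (Fin 3) (Fin 3) ℂ) -
      (!![-γ1, 0, k1; k2, -γ2, 0; 0, k3, -k1]).map Complex.ofReal).det =
    μ^3 + (γ1 + γ2 + k1 : ℝ)*μ^2 + (γ1*γ2 + k1*(γ1+γ2) : ℝ)*μ + (k1*(γ1*γ2 - k2*k3) : ℝ) := by
  rw [Matrix.det_fin_three]
  simp [Matrix.smul_apply, Matrix.one_apply, Matrix.map_apply]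
  ring

theorem stmt17 (γ1 γ2 k2 k3 : ℝ)
    (h1 : 0 < γ1) (h2 : 0 < γ2) (h3 : 0 < k2) (h4 : 0 < k3) :
    (∀ k1 : ℝ, 0 < k1 →
      (!![-γ1, 0, k1; k2, -γ2, 0; 0, k3, -k1]).det = k1 * (k2 * k3 - γ1 * γ2)) ∧
    (k2 * k3 < γ1 * γ2 → ∀ k1 : ℝ, 0 < k1 →
      HurwitzStable !![-γ1, 0, k1; k2, -γ2, 0; 0, k3, -k1]) ∧
    (γ1 * γ2 ≤ k2 * k3 → ∀ k1 : ℝ, 0 < k1 →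
      ¬ HurwitzStable !![-γ1, 0, k1; k2, -γ2, 0; 0, k3, -k1]) := by
  refine ⟨fun k1 _ => ?_, fun hlt k1 hk1 => ?_, fun hge k1 hk1 => ?_⟩
  · rw [Matrix.det_fin_three]; simp; ring
  · intro μ hμ
    rw [spec_iff17, charpoly17] at hμ
    refine cubic_stable17 (γ1 + γ2 + k1) (γ1*γ2 + k1*(γ1+γ2)) (k1*(γ1*γ2 - k2*k3)) ?_ ?_ ?_ ?_ μ hμ
    · linarith
    · nlinarith
    · nlinarith
    · nlinarith [mul_pos hk1 (mul_pos h3 h4), mul_pos (add_pos h1 h2) (mul_pos h1 h2),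
        mul_pos hk1 (mul_pos (add_pos h1 h2) (add_pos h1 h2)),
        mul_pos (mul_pos hk1 hk1) (add_pos h1 h2)]
  · intro hHS
    obtain ⟨x, hx0, hx⟩ := cubic_root17 (γ1 + γ2 + k1) (γ1*γ2 + k1*(γ1+γ2))
      (k1*(γ1*γ2 - k2*k3)) (by linarith) (by nlinarith) (by nlinarith)
    have hmem : (x : ℂ) ∈ spectrum ℂ
        ((!![-γ1, 0, k1; k2, -γ2, 0; 0, k3, -k1]).map Complex.ofReal) := by
      rw [spec_iff17, charpoly17]
      exact_mod_cast congrArg (Complex.ofReal) hx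
    have := hHS _ hmem
    simp at this
    linarith
end
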